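/- Suppose the vertex v of the path P satisfies the (weak) cover condition and no proper predecessor of v satisfies the strict cover condition. Then there exists a minimum weight vertex cover of P containing Partition(v) ∩ P_{⪯v}; in particular, there is a minimum weight vertex cover of P containing v. -/

import Mathlib

open Finset

/-- `C` is a vertex cover of the subpath of the path `P = (v_0, …, v_{n-1})`
induced by the vertices `v_lo, v_{lo+1}, …, v_{hi-1}` (half-open interval `[lo, hi)`);
the edges of this subpath are `{v_i, v_{i+1}}` for `lo ≤ i` and `i + 1 < hi`. -/
def IsCoverOn (lo hi : ℕ) (C : Finset ℕ) : Prop :=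
  (∀ j ∈ C, lo ≤ j ∧ j < hi) ∧ ∀ i : ℕ, lo ≤ i → i + 1 < hi → (i ∈ C ∨ i + 1 ∈ C)

/-- The total weight `ω(C) = ∑_{v ∈ C} ω(v)` of a set of vertices. -/
def wsum (ω : ℕ → ℝ) (C : Finset ℕ) : ℝ := ∑ j ∈ C, ω j

/-- `C` is a minimum weight vertex cover (MWVC) of the subpath on the vertices `[lo, hi)`. -/
def IsMWVCOn (ω : ℕ → ℝ) (lo hi : ℕ) (C : Finset ℕ) : Prop :=
  IsCoverOn lo hi C ∧ ∀ D : Finset ℕ, IsCoverOn lo hi D → wsum ω C ≤ wsum ω D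

/-- `Partition(v_l) ∩ P_{⪯ v_l}`: the vertices up to (and including) `v_l` lying on the
same side of the path's bipartition as `v_l`. -/
def sameSide (l : ℕ) : Finset ℕ := (range (l + 1)).filter fun j => j % 2 = l % 2

/-- `P_{⪯ v_l} ∖ Partition(v_l)`: the vertices up to `v_l` on the opposite side. -/
def otherSide (l : ℕ) : Finset ℕ := (range (l + 1)).filter fun j => j % 2 ≠ l % 2

/-- `v_l` satisfies the (weak) cover condition. -/
def CoverCond (ω : ℕ → ℝ) (l : ℕ) : Prop := wsum ω (sameSide l) ≤ wsum ω (otherSide l)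

/-- `v_l` satisfies the strict cover condition. -/
def StrictCoverCond (ω : ℕ → ℝ) (l : ℕ) : Prop := wsum ω (sameSide l) < wsum ω (otherSide l)

/-!
Write `S j` and `O j` for the weights of `sameSide j` and `otherSide j`, and let
`g j = S j - O j` (`sideGap`). Since `otherSide (j + 1) = sameSide j`, the gaps telescope,
`g 0 + ⋯ + g l = S l`, and `ω (j + 1) = g j + g (j + 1)`, `ω 0 = g 0`. The hypotheses say
`g j ≥ 0` for `j < l` and `g l ≤ 0`. Hence for a cover `D` of `v_0, …, v_l`,
`ω(D) = ∑_{i ≤ l} g i · |D ∩ {v_i, v_{i+1}}|`, where the count is at least `1` for `i < l`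
and at most `1` for `i = l`, so `ω(D) ≥ S l`. Replacing the part of a minimum cover on
`v_0, …, v_l` by `sameSide l`, which contains `v_l` and so still covers `{v_l, v_{l+1}}`,
therefore gives a minimum cover.
-/

lemma sum_range_le_wsum_of_isCoverOn {ω T : ℕ → ℝ} {l : ℕ} {D : Finset ℕ}
    (h₀ : T 0 = ω 0) (hsucc : ∀ i, T i + T (i + 1) = ω (i + 1))
    (hnonneg : ∀ i < l, 0 ≤ T i) (hl : T l ≤ 0) (hD : IsCoverOn 0 (l + 1) D) :
    ∑ i ∈ range (l + 1), T i ≤ wsum ω D := by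
  have hsub : D ⊆ range (l + 1) := fun j hj => mem_range.mpr (hD.1 j hj).2
  have hcount : ∀ i ∈ range l,
      T i ≤ (if i ∈ D then T i else 0) + (if i + 1 ∈ D then T i else 0) := by
    intro i hi
    have := hnonneg i (mem_range.mp hi)
    rcases hD.2 i (Nat.zero_le i) (by simpa using hi) with h | h <;> split_ifs <;> linarith
  have hlast : T l ≤ if l ∈ D then T l else 0 := by split_ifs <;> linarith
  have hsplit : wsum ω D = ∑ i ∈ range l, (if i + 1 ∈ D then T i else 0)
      + ∑ i ∈ range (l + 1), (if i ∈ D then T i else 0) := by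
    have hrange : wsum ω D = ∑ j ∈ range (l + 1), if j ∈ D then ω j else 0 := by
      rw [sum_ite_mem, inter_eq_right.mpr hsub, wsum]
    rw [hrange, sum_range_succ', sum_range_succ' _ l, ← h₀, ← add_assoc, ← sum_add_distrib]
    congr 1
    refine sum_congr rfl fun i _ => ?_
    rw [← hsucc]
    split_ifs <;> ring
  calc ∑ i ∈ range (l + 1), T i = ∑ i ∈ range l, T i + T l := sum_range_succ _ _
    _ ≤ ∑ i ∈ range l, ((if i ∈ D then T i else 0) + (if i + 1 ∈ D then T i else 0))
        + (if l ∈ D then T l else 0) := add_le_add (sum_le_sum hcount) hlast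
    _ = wsum ω D := by rw [hsplit, sum_range_succ, sum_add_distrib]; ring

lemma otherSide_zero : otherSide 0 = ∅ := by
  ext j; simp only [otherSide, mem_filter, mem_range, notMem_empty, iff_false]; omega

lemma otherSide_succ (j : ℕ) : otherSide (j + 1) = sameSide j := by
  ext i; simp only [otherSide, sameSide, mem_filter, mem_range]; omega

lemma sameSide_zero : sameSide 0 = {0} := by
  ext j; simp only [sameSide, mem_filter, mem_range, mem_singleton]; omega

lemma sameSide_succ (j : ℕ) : sameSide (j + 1) = insert (j + 1) (otherSide j) := by
  ext i; simp only [sameSide, otherSide, mem_insert, mem_filter, mem_range]; omega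

lemma self_mem_sameSide (l : ℕ) : l ∈ sameSide l := by
  simp [sameSide]

lemma isCoverOn_sameSide (l : ℕ) : IsCoverOn 0 (l + 1) (sameSide l) := by
  refine ⟨fun j hj => ⟨Nat.zero_le j, mem_range.mp (mem_filter.mp hj).1⟩, fun i _ hi => ?_⟩
  simp only [sameSide, mem_filter, mem_range]
  omega

noncomputable def sideGap (ω : ℕ → ℝ) (j : ℕ) : ℝ :=
  wsum ω (sameSide j) - wsum ω (otherSide j)

lemma sum_range_sideGap (ω : ℕ → ℝ) (l : ℕ) :
    ∑ i ∈ range (l + 1), sideGap ω i = wsum ω (sameSide l) := by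
  have h := sum_range_sub (fun j => wsum ω (otherSide j)) (l + 1)
  have h₀ : wsum ω (otherSide 0) = 0 := by rw [otherSide_zero, wsum, sum_empty]
  simp only [otherSide_succ, h₀, sub_zero] at h
  exact h

lemma sideGap_zero (ω : ℕ → ℝ) : sideGap ω 0 = ω 0 := by
  simp [sideGap, sameSide_zero, otherSide_zero, wsum]

lemma sideGap_add_sideGap_succ (ω : ℕ → ℝ) (i : ℕ) :
    sideGap ω i + sideGap ω (i + 1) = ω (i + 1) := by
  have hnot : i + 1 ∉ otherSide i := by simp [otherSide]
  have h : wsum ω (sameSide (i + 1)) = ω (i + 1) + wsum ω (otherSide i) := by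
    rw [sameSide_succ, wsum, sum_insert hnot, wsum]
  rw [sideGap, sideGap, otherSide_succ, h]
  ring

lemma exists_isMWVCOn (ω : ℕ → ℝ) (lo hi : ℕ) : ∃ C, IsMWVCOn ω lo hi C := by
  classical
  have hcov : IsCoverOn lo hi (Ico lo hi) :=
    ⟨fun j hj => mem_Ico.mp hj, fun i hlo hi' => Or.inl (mem_Ico.mpr ⟨hlo, by omega⟩)⟩
  obtain ⟨C, hC, hmin⟩ := exists_min_image
    ((Ico lo hi).powerset.filter (IsCoverOn lo hi)) (wsum ω) ⟨Ico lo hi, by simp [hcov]⟩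
  refine ⟨C, (mem_filter.mp hC).2, fun D hD => hmin D ?_⟩
  exact mem_filter.mpr ⟨mem_powerset.mpr fun j hj => mem_Ico.mpr (hD.1 j hj), hD⟩

lemma IsCoverOn.inter_range {n l : ℕ} {C : Finset ℕ} (hC : IsCoverOn 0 n C) (hl : l < n) :
    IsCoverOn 0 (l + 1) (C ∩ range (l + 1)) := by
  refine ⟨fun j hj => ⟨Nat.zero_le j, mem_range.mp (mem_inter.mp hj).2⟩, fun i _ hi => ?_⟩
  rcases hC.2 i (Nat.zero_le i) (by omega) with h | h
  · exact Or.inl (mem_inter.mpr ⟨h, mem_range.mpr (by omega)⟩)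
  · exact Or.inr (mem_inter.mpr ⟨h, mem_range.mpr hi⟩)

lemma IsMWVCOn.union_sdiff_range {ω : ℕ → ℝ} {n l : ℕ} {C D : Finset ℕ}
    (hC : IsMWVCOn ω 0 n C) (hl : l < n) (hD : IsCoverOn 0 (l + 1) D) (hlD : l ∈ D)
    (hDC : wsum ω D ≤ wsum ω (C ∩ range (l + 1))) :
    IsMWVCOn ω 0 n (D ∪ (C \ range (l + 1))) := by
  have hdisj : Disjoint D (C \ range (l + 1)) :=
    disjoint_left.mpr fun j hj hj' => (mem_sdiff.mp hj').2 (mem_range.mpr (hD.1 j hj).2)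
  have hcov : IsCoverOn 0 n (D ∪ (C \ range (l + 1))) := by
    refine ⟨fun j hj => ?_, fun i _ hi => ?_⟩
    · rcases mem_union.mp hj with h | h
      · exact ⟨Nat.zero_le j, by have := (hD.1 j h).2; omega⟩
      · exact hC.1.1 j (mem_sdiff.mp h).1
    · rcases lt_trichotomy i l with hil | rfl | hil
      · exact (hD.2 i (Nat.zero_le i) (by omega)).imp (mem_union_left _) (mem_union_left _)
      · exact Or.inl (mem_union_left _ hlD)
      · refine (hC.1.2 i (Nat.zero_le i) hi).imp ?_ ?_ <;> intro h <;>
          exact mem_union_right _ (mem_sdiff.mpr ⟨h, by simp only [mem_range]; omega⟩)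
  refine ⟨hcov, fun E hE => le_trans ?_ (hC.2 E hE)⟩
  calc wsum ω (D ∪ (C \ range (l + 1))) = wsum ω D + wsum ω (C \ range (l + 1)) :=
        sum_union hdisj
    _ ≤ wsum ω (C ∩ range (l + 1)) + wsum ω (C \ range (l + 1)) := by gcongr
    _ = wsum ω C := sum_inter_add_sum_sdiff _ _ _

/-- If `v_l` satisfies the (weak) cover condition and no proper
predecessor of `v_l` satisfies the strict cover condition, then there is a MWVC of the
whole path containing `Partition(v_l) ∩ P_{⪯ v_l}`; in particular one containing `v_l`. -/
theorem stmt_8 (n l : ℕ) (ω : ℕ → ℝ) (hl : l < n)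
    (hcc : CoverCond ω l) (hpred : ∀ j, j < l → ¬ StrictCoverCond ω j) :
    ∃ C : Finset ℕ, IsMWVCOn ω 0 n C ∧ sameSide l ⊆ C ∧ l ∈ C := by
  obtain ⟨C, hC⟩ := exists_isMWVCOn ω 0 n
  have hcheap : wsum ω (sameSide l) ≤ wsum ω (C ∩ range (l + 1)) := by
    rw [← sum_range_sideGap]
    exact sum_range_le_wsum_of_isCoverOn (sideGap_zero ω) (sideGap_add_sideGap_succ ω)
      (fun i hi => sub_nonneg.mpr (not_lt.mp (hpred i hi))) (sub_nonpos.mpr hcc)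
      (hC.1.inter_range hl)
  exact ⟨_, hC.union_sdiff_range hl (isCoverOn_sameSide l) (self_mem_sameSide l) hcheap,
    subset_union_left, mem_union_left _ (self_mem_sameSide l)⟩
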